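/- Let k ≥ 2 and m ≥ 1 be integers with 2·k^m ≥ (k+1)^m. If positive integers a_1, ..., a_k all lie in {1, 2, ..., (k+1)^m − 1} and satisfy a_1^(-1/m) + ... + a_k^(-1/m) = 1 (as real numbers), then a_1 = a_2 = ... = a_k = k^m. -/

import Mathlib

/-!
Put `γᵢ = aᵢ^(1/m)`. Each `γᵢ⁻¹` is a positive real whose `m`-th power is rational, so all its
complex conjugates have modulus `γᵢ⁻¹`; hence `|c₀| = γᵢ^(-d)` for the constant coefficient `c₀`
of its minimal polynomial over `ℚ`, which therefore is `X^d - |c₀|`. Its normalized trace is thus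
`0` unless `γᵢ⁻¹` is rational. Applying the `ℚ`-linear normalized trace to `∑ γᵢ⁻¹ = 1`, the
termwise bound `tr γᵢ⁻¹ ≤ γᵢ⁻¹` must be an equality, so every `γᵢ` is rational, hence an integer,
hence `≤ k` because `aᵢ < (k+1)^m`. Finally `k` numbers `γᵢ⁻¹ ≥ 1/k` summing to `1` all equal `1/k`.
-/

open Polynomial IntermediateField

theorem Polynomial.nextCoeff_X_pow_sub_C {R : Type*} [Ring R] [Nontrivial R] {n : ℕ} (hn : 2 ≤ n)
    (c : R) : (X ^ n - C c).nextCoeff = 0 := by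
  have hdeg : (X ^ n - C c : R[X]).natDegree = n := natDegree_X_pow_sub_C
  rw [nextCoeff_of_natDegree_pos (by omega), hdeg,
    coeff_sub, coeff_X_pow, coeff_C, if_neg (by omega), if_neg (by omega), sub_zero]

theorem isIntegral_of_pow_eq_rat {β : ℝ} {m : ℕ} (hm : m ≠ 0) {q : ℚ} (hq : β ^ m = q) :
    IsIntegral ℚ β :=
  ⟨X ^ m - C q, monic_X_pow_sub_C q hm, by simp [hq]⟩

theorem norm_eq_of_mem_aroots_minpoly {β : ℝ} (hβ : 0 ≤ β) {m : ℕ} (hm : m ≠ 0) {q : ℚ}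
    (hq : β ^ m = q) {z : ℂ} (hz : z ∈ (minpoly ℚ β).aroots ℂ) : ‖z‖ = β := by
  have hzq : z ^ m = q := by
    have hdvd : minpoly ℚ β ∣ X ^ m - C q := minpoly.dvd ℚ β (by simp [hq])
    simpa [sub_eq_zero] using aeval_eq_zero_of_dvd_aeval_eq_zero hdvd (mem_aroots.mp hz).2
  have : ‖z‖ ^ m = β ^ m := by
    rw [← norm_pow, hzq, hq, ← Complex.ofReal_ratCast, Complex.norm_real, Real.norm_eq_abs,
      ← hq, abs_of_nonneg (pow_nonneg hβ m)]
  exact (pow_left_inj₀ (norm_nonneg z) hβ hm).mp this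

theorem minpoly_eq_X_pow_sub_C_of_pow_eq {β : ℝ} (hβ : 0 ≤ β) {m : ℕ} (hm : m ≠ 0) {q : ℚ}
    (hq : β ^ m = q) : ∃ c : ℚ, minpoly ℚ β = X ^ (minpoly ℚ β).natDegree - C c := by
  have hint := isIntegral_of_pow_eq_rat hm hq
  have hsplits : ((minpoly ℚ β).map (algebraMap ℚ ℂ)).Splits := IsAlgClosed.splits _
  have hprod : ‖((minpoly ℚ β).aroots ℂ).prod‖ = β ^ (minpoly ℚ β).natDegree := by
    rw [← normHom_apply, map_multiset_prod, Multiset.map_congr rfl fun z hz ↦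
        (normHom_apply z).trans (norm_eq_of_mem_aroots_minpoly hβ hm hq hz),
      Multiset.map_const', Multiset.prod_replicate, aroots_def, ← hsplits.natDegree_eq_card_roots, natDegree_map]
  have hcoeff : β ^ (minpoly ℚ β).natDegree = |((minpoly ℚ β).coeff 0 : ℝ)| := by
    have := congrArg (‖·‖) (hsplits.coeff_zero_eq_prod_roots_of_monic ((minpoly.monic hint).map _))
    simp only [coeff_map, norm_mul, norm_pow, norm_neg, norm_one, one_pow, one_mul] at this
    rw [← aroots_def, hprod, eq_ratCast, ← Complex.ofReal_ratCast, Complex.norm_real,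
      Real.norm_eq_abs] at this
    exact this.symm
  refine ⟨|(minpoly ℚ β).coeff 0|, (minpoly.unique_of_degree_le_degree_minpoly ℚ β
    (monic_X_pow_sub_C _ (minpoly.natDegree_pos hint).ne') (by simp [hcoeff]) ?_).symm⟩
  rw [degree_X_pow_sub_C (minpoly.natDegree_pos hint), degree_eq_natDegree (minpoly.ne_zero hint)]

theorem normalizedTrace_eq_zero_of_pow_eq {K : IntermediateField ℚ ℝ} [Algebra.IsIntegral ℚ K]
    {x : K} (hx : 0 ≤ (x : ℝ)) (hirr : Irrational x) {m : ℕ} (hm : m ≠ 0) {q : ℚ}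
    (hq : (x : ℝ) ^ m = q) : Algebra.normalizedTrace ℚ K x = 0 := by
  have hdeg : (minpoly ℚ (x : ℝ)).natDegree ≠ 1 := fun h ↦
    hirr (by simpa [eq_ratCast] using minpoly.natDegree_eq_one_iff.mp h)
  have hdeg_pos := minpoly.natDegree_pos (isIntegral_of_pow_eq_rat hm hq)
  obtain ⟨c, hc⟩ := minpoly_eq_X_pow_sub_C_of_pow_eq hx hm hq
  have hmin : minpoly ℚ x = minpoly ℚ (x : ℝ) :=
    (minpoly.algebraMap_eq (algebraMap K ℝ).injective x).symm
  rw [Algebra.normalizedTrace_minpoly, hmin, hc,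
    nextCoeff_X_pow_sub_C (by omega), neg_zero, smul_zero]

theorem not_irrational_of_sum_eq_ratCast {ι : Type*} [Fintype ι] {m : ℕ} (hm : m ≠ 0)
    {β : ι → ℝ} (hβ : ∀ i, 0 ≤ β i) (hpow : ∀ i, ∃ q : ℚ, β i ^ m = q) {s : ℚ}
    (hsum : ∑ i, β i = s) (i : ι) : ¬ Irrational (β i) := by
  let K := adjoin ℚ (Set.range β)
  have : FiniteDimensional ℚ K := finiteDimensional_adjoin <| by
    rintro _ ⟨j, rfl⟩
    obtain ⟨q, hq⟩ := hpow j
    exact isIntegral_of_pow_eq_rat hm hq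
  let b (j : ι) : K := ⟨β j, subset_adjoin ℚ _ ⟨j, rfl⟩⟩
  let T := Algebra.normalizedTrace ℚ K
  have hT_ratCast (x : K) (r : ℚ) (hx : (x : ℝ) = r) : T x = r := by
    have : x = algebraMap ℚ K r := Subtype.ext (by simpa using hx)
    rw [this, Algebra.normalizedTrace_algebraMap_apply, Algebra.normalizedTrace_self_apply]
  have hT_le (j : ι) : (T (b j) : ℝ) ≤ β j := by
    by_cases hj : Irrational (β j)
    · obtain ⟨q, hq⟩ := hpow j
      simpa [T, normalizedTrace_eq_zero_of_pow_eq (x := b j) (hβ j) hj hm hq] using hβ j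
    · obtain ⟨r, hr⟩ := not_not.mp hj
      rw [hT_ratCast (b j) r hr.symm, hr]
  have hT_sum : ∑ j, (T (b j) : ℝ) = ∑ j, β j := by
    rw [← Rat.cast_sum, ← map_sum, hT_ratCast _ s (by simpa using hsum), hsum]
  have hT_eq := (Finset.sum_eq_sum_iff_of_le fun j _ ↦ hT_le j).mp hT_sum i (Finset.mem_univ i)
  exact fun h ↦ h ⟨_, hT_eq⟩

theorem le_of_not_irrational_of_pow_lt {x : ℝ} (hx : 0 ≤ x) (hrat : ¬Irrational x) {m a k : ℕ}
    (hm : m ≠ 0) (hxa : x ^ m = a) (ha : a < (k + 1) ^ m) : x ≤ k := by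
  obtain ⟨y, rfl⟩ : ∃ y : ℤ, x = y := by
    by_contra h
    exact hrat (irrational_nrt_of_notint_nrt m a (by simpa using hxa) h (Nat.pos_of_ne_zero hm))
  have hlt : (y : ℝ) < k + 1 := by
    rw [← pow_lt_pow_iff_left₀ hx (by positivity) hm, hxa]
    exact_mod_cast ha
  have : y < k + 1 := by exact_mod_cast hlt
  exact_mod_cast Int.lt_add_one_iff.mp this

theorem eq_card_of_sum_inv_eq_one {ι : Type*} [Fintype ι] {x : ι → ℝ} (hx : ∀ i, 0 < x i)
    (hle : ∀ i, x i ≤ Fintype.card ι) (hsum : ∑ i, (x i)⁻¹ = 1) (i : ι) :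
    x i = Fintype.card ι := by
  have hcard : (Fintype.card ι : ℝ) ≠ 0 := by
    have : Nonempty ι := ⟨i⟩
    positivity
  have hinv_le (j : ι) : (Fintype.card ι : ℝ)⁻¹ ≤ (x j)⁻¹ := inv_anti₀ (hx j) (hle j)
  have hsum_card : ∑ _j : ι, (Fintype.card ι : ℝ)⁻¹ = ∑ j, (x j)⁻¹ := by
    rw [hsum, Finset.sum_const, Finset.card_univ, nsmul_eq_mul, mul_inv_cancel₀ hcard]
  have := (Finset.sum_eq_sum_iff_of_le fun j _ ↦ hinv_le j).mp hsum_card i (Finset.mem_univ i)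
  exact (inv_inj.mp this).symm

theorem unique_solution_reciprocal_roots_general (k m : ℕ) (hm : 1 ≤ m)
    (a : Fin k → ℕ) (ha : ∀ i, 1 ≤ a i ∧ a i ≤ (k + 1) ^ m - 1)
    (heq : ∑ i, (((a i : ℝ)) ^ ((1 : ℝ) / m))⁻¹ = 1) :
    ∀ i, a i = k ^ m := by
  have hm0 : m ≠ 0 := by omega
  set γ : Fin k → ℝ := fun i ↦ (a i : ℝ) ^ ((1 : ℝ) / m)
  replace heq : ∑ i, (γ i)⁻¹ = 1 := heq
  have hγ_pos (i : Fin k) : 0 < γ i := by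
    have : 0 < (a i : ℝ) := by exact_mod_cast (ha i).1
    positivity
  have hγ_pow (i : Fin k) : γ i ^ m = a i := by
    rw [show γ i = (a i : ℝ) ^ (m : ℝ)⁻¹ by simp [γ],
      Real.rpow_inv_natCast_pow (Nat.cast_nonneg _) hm0]
  have hγ_rat (i : Fin k) : ¬Irrational (γ i) := by
    rw [← irrational_inv_iff]
    refine not_irrational_of_sum_eq_ratCast hm0 (fun j ↦ (inv_pos.mpr (hγ_pos j)).le)
      (fun j ↦ ⟨(a j : ℚ)⁻¹, by simp [inv_pow, hγ_pow]⟩) (s := 1) (by simpa using heq) i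
  have hγ_le (i : Fin k) : γ i ≤ Fintype.card (Fin k) := by
    rw [Fintype.card_fin]
    refine le_of_not_irrational_of_pow_lt (hγ_pos i).le (hγ_rat i) hm0 (hγ_pow i) ?_
    have := (ha i).2
    have : 0 < (k + 1) ^ m := by positivity
    omega
  intro i
  have := hγ_pow i
  rw [eq_card_of_sum_inv_eq_one hγ_pos hγ_le heq i, Fintype.card_fin] at this
  exact_mod_cast this.symm

theorem unique_solution_reciprocal_roots (k m : ℕ) (hk : 2 ≤ k) (hm : 1 ≤ m)
    (hkm : (k + 1) ^ m ≤ 2 * k ^ m)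
    (a : Fin k → ℕ) (ha : ∀ i, 1 ≤ a i ∧ a i ≤ (k + 1) ^ m - 1)
    (heq : ∑ i, (((a i : ℝ)) ^ ((1 : ℝ) / m))⁻¹ = 1) :
    ∀ i, a i = k ^ m :=
  unique_solution_reciprocal_roots_general k m hm a ha heq
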